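/- Every binary word s satisfies P(s) ≤ F_{|s|+3} − 1, where |s| is the length of s and F_m is the m-th Fibonacci number; consequently, a binary word with exactly n distinct subsequences has length Ω(log n). -/

import Mathlib

/-- `P s` is the number of distinct subsequences of the binary word `s`
(the letter `A` is `true`, the letter `B` is `false`), including the empty one. -/
def P (s : List Bool) : ℕ := s.sublists.toFinset.card

/-- `PA s` is the number of distinct subsequences of `s` starting with `A` (= `true`),
plus one for the empty subsequence. -/
def PA (s : List Bool) : ℕ :=
  ((s.sublists.toFinset).filter (fun t => t.head? = some true)).card + 1

/-- `PB s` is the number of distinct subsequences of `s` starting with `B` (= `false`),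
plus one for the empty subsequence. -/
def PB (s : List Bool) : ℕ :=
  ((s.sublists.toFinset).filter (fun t => t.head? = some false)).card + 1

/-- `QA s` is the number of distinct subsequences of `s` ending with `A` (= `true`),
plus one for the empty subsequence. -/
def QA (s : List Bool) : ℕ :=
  ((s.sublists.toFinset).filter (fun t => t.getLast? = some true)).card + 1

/-- `QB s` is the number of distinct subsequences of `s` ending with `B` (= `false`),
plus one for the empty subsequence. -/
def QB (s : List Bool) : ℕ :=
  ((s.sublists.toFinset).filter (fun t => t.getLast? = some false)).card + 1

/-- The word `gen a b`, defined by the Euclidean recursion: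
`gen 1 1 = []`, `gen a b = A ∘ gen (a-b) b` if `a > b`, `gen a b = B ∘ gen a (b-a)` if `b > a`. -/
def gen : ℕ → ℕ → List Bool
  | 0, _ => []
  | _ + 1, 0 => []
  | a + 1, b + 1 =>
    if a > b then true :: gen (a - b) (b + 1)
    else if b > a then false :: gen (a + 1) (b - a)
    else []
termination_by a b => a + b
decreasing_by all_goals omega

/-- `star s` swaps all letters `A` and `B` in `s`. -/
def star (s : List Bool) : List Bool := s.map (fun x => !x)

/-- `z n` is the alternating word `ABAB…` of length `n`. -/
def z : ℕ → List Bool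
  | 0 => []
  | n + 1 => true :: star (z n)

/-!
Splitting subsequences by their first letter gives `PA s + PB s = P s + 1`. Prepending `A`
turns `(PA, PB)` into `(PA + PB, PB)`, prepending `B` turns it into `(PA, PA + PB)`; from
`(1, 1)` these Fibonacci-type steps give `PA s, PB s ≤ F_{|s|+2}` and
`PA s + PB s ≤ F_{|s|+3}`. The logarithmic bound only needs `P s ≤ 2 ^ |s|`.
-/

section HeadFilter

variable {α : Type*} [DecidableEq α]

theorem List.sublists_toFinset_filter_head_cons_self (a : α) (s : List α) :
    (a :: s).sublists.toFinset.filter (fun t => t.head? = some a)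
      = s.sublists.toFinset.image (a :: ·) := by
  ext t
  simp only [Finset.mem_filter, Finset.mem_image, List.mem_toFinset, List.mem_sublists]
  constructor
  · rintro ⟨hsub, hhead⟩
    cases t with
    | nil => simp at hhead
    | cons c r =>
      obtain rfl : c = a := by simpa using hhead
      exact ⟨r, List.cons_sublist_cons.1 hsub, rfl⟩
  · rintro ⟨r, hr, rfl⟩
    exact ⟨List.cons_sublist_cons.2 hr, rfl⟩

theorem List.sublists_toFinset_filter_head_cons_of_ne {a b : α} (hab : a ≠ b) (s : List α) :
    (a :: s).sublists.toFinset.filter (fun t => t.head? = some b)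
      = s.sublists.toFinset.filter (fun t => t.head? = some b) := by
  ext t
  simp only [Finset.mem_filter, List.mem_toFinset, List.mem_sublists, and_congr_left_iff]
  intro hhead
  refine ⟨fun hsub => ?_, List.Sublist.cons a⟩
  cases hsub with
  | cons _ h => exact h
  | cons_cons _ h => exact absurd (by simpa using hhead) hab

theorem List.card_sublists_toFinset_filter_head_cons_self (a : α) (s : List α) :
    ((a :: s).sublists.toFinset.filter (fun t => t.head? = some a)).card
      = s.sublists.toFinset.card := by
  rw [List.sublists_toFinset_filter_head_cons_self,
    Finset.card_image_of_injective _ List.cons_injective]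

end HeadFilter

theorem PA_add_PB (s : List Bool) : PA s + PB s = P s + 1 := by
  unfold PA PB P
  set S := s.sublists.toFinset
  have hsplit : S.filter (fun t => ¬ t.head? = some true)
      = insert [] (S.filter (fun t => t.head? = some false)) := by
    ext t
    cases t with
    | nil => simp [S]
    | cons c r => cases c <;> simp
  have h := Finset.card_filter_add_card_filter_not (s := S) (fun t => t.head? = some true)
  rw [hsplit, Finset.card_insert_of_notMem (by simp)] at h
  omega

theorem PA_true_cons (s : List Bool) : PA (true :: s) = P s + 1 := by
  rw [PA, List.card_sublists_toFinset_filter_head_cons_self, P]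

theorem PB_false_cons (s : List Bool) : PB (false :: s) = P s + 1 := by
  rw [PB, List.card_sublists_toFinset_filter_head_cons_self, P]

theorem PB_true_cons (s : List Bool) : PB (true :: s) = PB s := by
  rw [PB, PB, List.sublists_toFinset_filter_head_cons_of_ne (by decide)]

theorem PA_false_cons (s : List Bool) : PA (false :: s) = PA s := by
  rw [PA, PA, List.sublists_toFinset_filter_head_cons_of_ne (by decide)]

theorem PA_PB_le_fib (s : List Bool) :
    PA s ≤ Nat.fib (s.length + 2) ∧ PB s ≤ Nat.fib (s.length + 2) ∧
      PA s + PB s ≤ Nat.fib (s.length + 3) := by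
  induction s with
  | nil => decide
  | cons b t ih =>
    obtain ⟨hA, hB, hAB⟩ := ih
    have hP := PA_add_PB t
    have hmono : Nat.fib (t.length + 2) ≤ Nat.fib (t.length + 3) := Nat.fib_le_fib_succ
    have hrec : Nat.fib (t.length + 4) = Nat.fib (t.length + 2) + Nat.fib (t.length + 3) :=
      Nat.fib_add_two
    show PA _ ≤ Nat.fib (t.length + 3) ∧ PB _ ≤ Nat.fib (t.length + 3) ∧
      PA _ + PB _ ≤ Nat.fib (t.length + 4)
    cases b
    · rw [PA_false_cons, PB_false_cons]
      omega
    · rw [PA_true_cons, PB_true_cons]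
      omega

theorem P_add_one_le_fib (s : List Bool) : P s + 1 ≤ Nat.fib (s.length + 3) :=
  PA_add_PB s ▸ (PA_PB_le_fib s).2.2

theorem one_le_P (s : List Bool) : 1 ≤ P s :=
  Finset.card_pos.2 ⟨[], by simp⟩

theorem P_le_two_pow (s : List Bool) : P s ≤ 2 ^ s.length :=
  (List.toFinset_card_le _).trans (List.length_sublists s).le

theorem log_P_le (s : List Bool) : Real.log (P s) ≤ s.length * Real.log 2 := by
  have hpos : (0 : ℝ) < P s := by exact_mod_cast one_le_P s
  have hpow : (P s : ℝ) ≤ 2 ^ s.length := by exact_mod_cast P_le_two_pow s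
  calc Real.log (P s) ≤ Real.log (2 ^ s.length) := Real.log_le_log hpos hpow
    _ = s.length * Real.log 2 := Real.log_pow _ _

/-- Every binary word `s` satisfies `P(s) ≤ F_{|s|+3} - 1`; consequently a binary word with
exactly `n` subsequences has length `Ω(log n)`. -/
theorem P_le_fib_and_length_log :
    (∀ s : List Bool, P s ≤ Nat.fib (s.length + 3) - 1) ∧
    ∃ c : ℝ, 0 < c ∧ ∀ s : List Bool, c * Real.log (P s) ≤ (s.length : ℝ) := by
  refine ⟨fun s => Nat.le_sub_one_of_lt (P_add_one_le_fib s), ?_⟩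
  have hlog2 : 0 < Real.log 2 := Real.log_pos one_lt_two
  refine ⟨(Real.log 2)⁻¹, inv_pos.2 hlog2, fun s => ?_⟩
  rw [inv_mul_le_iff₀ hlog2, mul_comm]
  exact log_P_le s
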